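/- Under the standing hypotheses with 1_g ≠ 0 for all g ∈ 𝒢, let ℋ ∈ wSub_gt(𝒢) with the chosen decomposition and transversals, let T = S^{α_ℋ} and T_{y_j} = S_{y_j}^{α_{ℋ_j(y_j)}} for 1 ≤ j ≤ r. Then 𝒢_T = ℋ if and only if 𝒢(y_j)_{T_{y_j}} = ℋ_j(y_j) for all 1 ≤ j ≤ r. -/

import Mathlib

/-!
An element of `S^{α_ℋ}` cut down to `S_{y_j}` is an invariant of `ℋ_j(y_j)`, which gives one
direction. Conversely, an invariant `s ∈ S_{y_j}` of `ℋ_j(y_j)` spreads along the transversal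
to the invariant `∑_{z ∈ Y_j} α_{τ_z}(s)` of `ℋ`. An arrow `g : u → v` fixing `S^{α_ℋ}` fixes
in particular `1_{Y_j}`, so (as `1_g ≠ 0`) it does not leave `Y_j`, and fixing the spread of
every such `s` says that the loop `τ_v⁻¹ g τ_u` fixes `S_{y_j}^{α_{ℋ_j(y_j)}}`. Hence that loop
lies in `ℋ_j(y_j)`, and `g` in `ℋ`.
-/

open CategoryTheory

namespace PaperGalois

/-- A unital partial action of a groupoid (with object/morphism data given by a
`CategoryTheory.Groupoid` structure on `Obj`) on a commutative ring `S`.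
For a morphism `g : a ⟶ b` (source `a`, target `b`), `e g` is the central idempotent
with `S_g = S • e g`, and `act g s` encodes `α_g(s · 1_{g⁻¹})`. -/
structure UPA (Obj : Type*) [Groupoid Obj] (S : Type*) [CommRing S] where
  e : ∀ ⦃a b : Obj⦄, (a ⟶ b) → S
  act : ∀ ⦃a b : Obj⦄, (a ⟶ b) → S → S
  idem : ∀ ⦃a b : Obj⦄ (g : a ⟶ b), e g * e g = e g
  e_le : ∀ ⦃a b : Obj⦄ (g : a ⟶ b), e g * e (𝟙 b) = e g
  act_proj : ∀ ⦃a b : Obj⦄ (g : a ⟶ b) (s : S), act g (s * e (Groupoid.inv g)) = act g s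
  act_mem : ∀ ⦃a b : Obj⦄ (g : a ⟶ b) (s : S), act g s * e g = act g s
  act_add : ∀ ⦃a b : Obj⦄ (g : a ⟶ b) (s t : S), act g (s + t) = act g s + act g t
  act_mul : ∀ ⦃a b : Obj⦄ (g : a ⟶ b) (s t : S), act g (s * t) = act g s * act g t
  act_unit : ∀ ⦃a b : Obj⦄ (g : a ⟶ b), act g (e (Groupoid.inv g)) = e g
  act_id : ∀ (a : Obj) (s : S), act (𝟙 a) s = s * e (𝟙 a)
  act_inv : ∀ ⦃a b : Obj⦄ (g : a ⟶ b) (s : S),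
      act (Groupoid.inv g) (act g s) = s * e (Groupoid.inv g)
  act_comp : ∀ ⦃a b c : Obj⦄ (h : a ⟶ b) (g : b ⟶ c) (s : S),
      act g (act h s) = act (h ≫ g) s * e g

namespace UPA

variable {Obj : Type*} [Groupoid Obj] {S : Type*} [CommRing S] (α : UPA Obj S)

lemma act_zero ⦃a b : Obj⦄ (g : a ⟶ b) : α.act g 0 = 0 := by
  have h := α.act_add g 0 0
  rw [add_zero] at h
  exact (left_eq_add.mp h)

lemma act_neg ⦃a b : Obj⦄ (g : a ⟶ b) (s : S) : α.act g (-s) = -(α.act g s) := by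
  have h := α.act_add g s (-s)
  rw [add_neg_cancel, α.act_zero] at h
  exact (eq_neg_of_add_eq_zero_right h.symm)

lemma act_one ⦃a b : Obj⦄ (g : a ⟶ b) : α.act g 1 = α.e g := by
  have h := α.act_proj g 1
  rw [one_mul, α.act_unit] at h
  exact h.symm

lemma act_e_src ⦃a b : Obj⦄ (g : a ⟶ b) : α.act g (α.e (𝟙 a)) = α.e g := by
  have h1 : α.e (𝟙 a) * α.e (Groupoid.inv g) = α.e (Groupoid.inv g) := by
    rw [mul_comm]; exact α.e_le (Groupoid.inv g)
  have h2 := α.act_proj g (α.e (𝟙 a))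
  rw [h1, α.act_unit] at h2
  exact h2.symm

/-- The set of `α`-invariant elements of `S` relative to a subgroupoid `H`:
`S^{α_H} = {s ∈ S : α_h(s·1_{h⁻¹}) = s·1_h for all h ∈ H}`. -/
def invSet (H : Subgroupoid Obj) : Set S :=
  {s : S | ∀ ⦃a b : Obj⦄ (h : a ⟶ b), h ∈ H.arrows a b → α.act h s = s * α.e h}

/-- The invariants `S_y^{α_A}` of the corner ring `S_y = S·1_y` under a set `A`
of loops at `y`. -/
def grpInvSet (y : Obj) (A : Set (y ⟶ y)) : Set S :=
  {s : S | s * α.e (𝟙 y) = s ∧ ∀ g ∈ A, α.act g s = s * α.e g}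

/-- The arrows `a ⟶ b` of the groupoid acting trivially on the subset `T ⊆ S`;
for `T` a subring this gives `𝒢_T`. -/
def fixingSet (T : Set S) (a b : Obj) : Set (a ⟶ b) :=
  {g : a ⟶ b | ∀ t ∈ T, α.act g t = t * α.e g}

/-- `⊕_{y ∈ Z} S_y`, the part of `S` supported on a set `Z` of objects. -/
def partSet (Z : Set Obj) : Set S :=
  {s : S | ∀ y : Obj, y ∉ Z → s * α.e (𝟙 y) = 0}

/-- `T·1_y ⊆ S_y` for a subset `T ⊆ S`. -/
def cornerSet (T : Set S) (y : Obj) : Set S :=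
  (fun t => t * α.e (𝟙 y)) '' T

/-- `T' ⊆ S_y` is `α_{𝒢(y,z)}`-strong. -/
def strongAt (T' : Set S) (a b : Obj) : Prop :=
  ∀ g h : a ⟶ b, (h ≫ Groupoid.inv g) ∉ α.fixingSet T' a a →
    ∀ f : S, f * f = f → f ≠ 0 → (f * α.e g = f ∨ f * α.e h = f) →
      ∃ t ∈ T', α.act g t * f ≠ α.act h t * f

/-- `T ⊆ S` is `α`-strong. -/
def IsStrong (T : Set S) : Prop :=
  ∀ a b : Obj, α.strongAt (α.cornerSet T a) a b

/-- Existence of a partial Galois coordinate system for the restriction of `α` to the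
subgroupoid `H` acting on `S_H ⊆ S` (for `H = ⊤`, `Sub = univ` this says that
`S^{α_𝒢} ⊆ S` is an `α_𝒢`-partial Galois extension). -/
def IsGaloisCoordSystem (H : Subgroupoid Obj) (Sub : Set S) : Prop :=
  ∃ (m : ℕ) (av bv : Fin m → S),
    (∀ i, av i ∈ Sub) ∧ (∀ i, bv i ∈ Sub) ∧
    (∀ ⦃a b : Obj⦄ (g : a ⟶ b), g ∈ H.arrows a b → a ≠ b →
        ∑ i, av i * α.act g (bv i) = 0) ∧
    (∀ (a : Obj) (g : a ⟶ a), g ∈ H.arrows a a → g ≠ 𝟙 a →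
        ∑ i, av i * α.act g (bv i) = 0) ∧
    (∀ a : Obj, a ∈ H.objs → ∑ i, av i * α.act (𝟙 a) (bv i) = α.e (𝟙 a))

/-- Group-type condition for the restriction of `α` to `H`, at the base object `u`:
there is a transversal (inside `H`) from `u` to every object of the `H`-component of `u`
whose ideals are as large as possible. -/
def IsGroupTypeAt (H : Subgroupoid Obj) (u : Obj) : Prop :=
  ∃ σ : ∀ v : Obj, (H.arrows u v).Nonempty → (u ⟶ v),
    (∀ v hv, σ v hv ∈ H.arrows u v) ∧
    (∀ h, σ u h = 𝟙 u) ∧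
    (∀ v hv, α.e (Groupoid.inv (σ v hv)) = α.e (𝟙 u) ∧ α.e (σ v hv) = α.e (𝟙 v))

/-- The restriction `α_H` of `α` to the subgroupoid `H` is of group-type. -/
def IsGroupType (H : Subgroupoid Obj) : Prop :=
  ∀ u ∈ H.objs, α.IsGroupTypeAt H u

end UPA

structure SubCorner (S : Type*) [CommRing S] where
  carrier : Set S
  unit : S
  unit_mem : unit ∈ carrier
  mul_unit : ∀ s ∈ carrier, s * unit = s
  add_mem : ∀ ⦃s t : S⦄, s ∈ carrier → t ∈ carrier → s + t ∈ carrier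
  mul_mem : ∀ ⦃s t : S⦄, s ∈ carrier → t ∈ carrier → s * t ∈ carrier
  neg_mem : ∀ ⦃s : S⦄, s ∈ carrier → -s ∈ carrier
  zero_mem : (0 : S) ∈ carrier

namespace SubCorner

variable {S : Type*} [CommRing S]

lemma nsmul_mem (P : SubCorner S) (n : ℕ) {s : S} (hs : s ∈ P.carrier) :
    n • s ∈ P.carrier := by
  induction n with
  | zero => simpa using P.zero_mem
  | succ n ih => rw [succ_nsmul]; exact P.add_mem ih hs

lemma zsmul_mem (P : SubCorner S) (n : ℤ) {s : S} (hs : s ∈ P.carrier) :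
    n • s ∈ P.carrier := by
  cases n with
  | ofNat n => simpa [natCast_zsmul] using P.nsmul_mem n hs
  | negSucc n => rw [negSucc_zsmul]; exact P.neg_mem (P.nsmul_mem (n+1) hs)

instance (P : SubCorner S) : CommRing ↥P.carrier where
  add a b := ⟨a.1 + b.1, P.add_mem a.2 b.2⟩
  mul a b := ⟨a.1 * b.1, P.mul_mem a.2 b.2⟩
  neg a := ⟨-a.1, P.neg_mem a.2⟩
  zero := ⟨0, P.zero_mem⟩
  one := ⟨P.unit, P.unit_mem⟩
  add_assoc a b c := Subtype.ext (add_assoc _ _ _)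
  zero_add a := Subtype.ext (zero_add _)
  add_zero a := Subtype.ext (add_zero _)
  add_comm a b := Subtype.ext (add_comm _ _)
  mul_assoc a b c := Subtype.ext (mul_assoc _ _ _)
  one_mul a := Subtype.ext (by
    show P.unit * a.1 = a.1
    rw [mul_comm]; exact P.mul_unit a.1 a.2)
  mul_one a := Subtype.ext (P.mul_unit a.1 a.2)
  left_distrib a b c := Subtype.ext (left_distrib _ _ _)
  right_distrib a b c := Subtype.ext (right_distrib _ _ _)
  mul_comm a b := Subtype.ext (mul_comm _ _)
  zero_mul a := Subtype.ext (zero_mul _)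
  mul_zero a := Subtype.ext (mul_zero _)
  neg_add_cancel a := Subtype.ext (neg_add_cancel _)
  nsmul n a := ⟨n • a.1, P.nsmul_mem n a.2⟩
  nsmul_zero a := Subtype.ext (zero_nsmul _)
  nsmul_succ n a := Subtype.ext (succ_nsmul _ _)
  zsmul n a := ⟨n • a.1, P.zsmul_mem n a.2⟩
  zsmul_zero' a := Subtype.ext (zero_zsmul _)
  zsmul_succ' n a := Subtype.ext (by
    show ((n.succ : ℤ)) • a.1 = (n : ℤ) • a.1 + a.1
    rw [Int.natCast_succ, add_zsmul, one_zsmul])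
  zsmul_neg' n a := Subtype.ext (by
    show (Int.negSucc n) • a.1 = -(((n.succ : ℤ)) • a.1)
    rw [negSucc_zsmul]
    norm_cast)

def incl {P Q : SubCorner S} (hle : P.carrier ⊆ Q.carrier) (hu : P.unit = Q.unit) :
    ↥P.carrier →+* ↥Q.carrier where
  toFun a := ⟨a.1, hle a.2⟩
  map_one' := Subtype.ext hu
  map_mul' _ _ := rfl
  map_zero' := rfl
  map_add' _ _ := rfl

def IsSepExt (P Q : SubCorner S) (hle : P.carrier ⊆ Q.carrier) (hu : P.unit = Q.unit) : Prop :=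
  letI : Algebra ↥P.carrier ↥Q.carrier := (incl hle hu).toAlgebra
  ∃ ε : TensorProduct ↥P.carrier ↥Q.carrier ↥Q.carrier,
    (∀ t : ↥Q.carrier,
        (TensorProduct.tmul ↥P.carrier t (1 : ↥Q.carrier)) * ε
          = ε * (TensorProduct.tmul ↥P.carrier (1 : ↥Q.carrier) t)) ∧
    LinearMap.mul' ↥P.carrier ↥Q.carrier ε = 1

end SubCorner

/-- A `Subring` of `S`, seen as a corner subring with identity `1`. -/
def Subring.toSC {S : Type*} [CommRing S] (T : Subring S) : SubCorner S where
  carrier := (T : Set S)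
  unit := 1
  unit_mem := T.one_mem
  mul_unit := fun s _ => mul_one s
  add_mem := fun _ _ hs ht => T.add_mem hs ht
  mul_mem := fun _ _ hs ht => T.mul_mem hs ht
  neg_mem := fun _ hs => T.neg_mem hs
  zero_mem := T.zero_mem

namespace UPA

variable {Obj : Type*} [Groupoid Obj] {S : Type*} [CommRing S] (α : UPA Obj S)

lemma invSet_one_mem (H : Subgroupoid Obj) : (1 : S) ∈ α.invSet H :=
  fun _ _ h _ => by rw [α.act_one h, one_mul]

lemma invSet_zero_mem (H : Subgroupoid Obj) : (0 : S) ∈ α.invSet H :=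
  fun _ _ h _ => by rw [α.act_zero h, zero_mul]

lemma invSet_add_mem (H : Subgroupoid Obj) {s t : S} (hs : s ∈ α.invSet H)
    (ht : t ∈ α.invSet H) : s + t ∈ α.invSet H :=
  fun _ _ h hH => by rw [α.act_add h, hs h hH, ht h hH, add_mul]

lemma invSet_mul_mem (H : Subgroupoid Obj) {s t : S} (hs : s ∈ α.invSet H)
    (ht : t ∈ α.invSet H) : s * t ∈ α.invSet H :=
  fun _ _ h hH => by
    rw [α.act_mul h, hs h hH, ht h hH, mul_mul_mul_comm, α.idem h]

lemma invSet_neg_mem (H : Subgroupoid Obj) {s : S} (hs : s ∈ α.invSet H) :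
    -s ∈ α.invSet H :=
  fun _ _ h hH => by rw [α.act_neg h, hs h hH, neg_mul]

/-- The subring of invariants `S^{α_H}` of `S`, a genuine unital subring of `S`. -/
def invariantsSubring (H : Subgroupoid Obj) : Subring S where
  carrier := α.invSet H
  one_mem' := α.invSet_one_mem H
  zero_mem' := α.invSet_zero_mem H
  add_mem' := α.invSet_add_mem H
  mul_mem' := α.invSet_mul_mem H
  neg_mem' := α.invSet_neg_mem H

/-- `S^{α_H}` as a corner subring of `S` (with identity `1`). -/
def invariantsSC (H : Subgroupoid Obj) : SubCorner S where
  carrier := α.invSet H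
  unit := 1
  unit_mem := α.invSet_one_mem H
  mul_unit := fun s _ => mul_one s
  add_mem := fun _ _ hs ht => α.invSet_add_mem H hs ht
  mul_mem := fun _ _ hs ht => α.invSet_mul_mem H hs ht
  neg_mem := fun _ hs => α.invSet_neg_mem H hs
  zero_mem := α.invSet_zero_mem H

lemma grpInvSet_unit_mem (y : Obj) (A : Set (y ⟶ y)) :
    α.e (𝟙 y) ∈ α.grpInvSet y A := by
  refine ⟨α.idem (𝟙 y), fun g _ => ?_⟩
  rw [α.act_e_src g]
  have : α.e (𝟙 y) * α.e g = α.e g := by rw [mul_comm]; exact α.e_le g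
  rw [this]

/-- `S_y^{α_A}` as a corner subring of `S` (with identity `1_y`). -/
def grpInvSC (y : Obj) (A : Set (y ⟶ y)) : SubCorner S where
  carrier := α.grpInvSet y A
  unit := α.e (𝟙 y)
  unit_mem := α.grpInvSet_unit_mem y A
  mul_unit := fun _ hs => hs.1
  add_mem := fun s t hs ht =>
    ⟨by rw [add_mul, hs.1, ht.1], fun g hg => by
      rw [α.act_add g, hs.2 g hg, ht.2 g hg, add_mul]⟩
  mul_mem := fun s t hs ht =>
    ⟨by rw [mul_assoc, ht.1], fun g hg => by
      rw [α.act_mul g, hs.2 g hg, ht.2 g hg, mul_mul_mul_comm, α.idem g]⟩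
  neg_mem := fun s hs =>
    ⟨by rw [neg_mul, hs.1], fun g hg => by rw [α.act_neg g, hs.2 g hg, neg_mul]⟩
  zero_mem := ⟨zero_mul _, fun g _ => by rw [α.act_zero g, zero_mul]⟩

lemma invSet_le (H : Subgroupoid Obj) :
    α.invSet (Subgroupoid.full (Set.univ : Set Obj)) ⊆ α.invSet H :=
  fun _ hs _ _ h _ => hs h ⟨trivial, trivial⟩

lemma invSet_le_subring {T : Subring S}
    (h : ∀ s ∈ α.invSet (Subgroupoid.full (Set.univ : Set Obj)), s ∈ T) :
    (α.invariantsSC (Subgroupoid.full (Set.univ : Set Obj))).carrier ⊆ (Subring.toSC T).carrier :=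
  h

lemma grpInvSet_le (y : Obj) (A : Set (y ⟶ y)) :
    α.grpInvSet y (Set.univ : Set (y ⟶ y)) ⊆ α.grpInvSet y A :=
  fun _ hs => ⟨hs.1, fun g _ => hs.2 g trivial⟩

end UPA

lemma _root_.CategoryTheory.Subgroupoid.mem_of_comp_comp_inv_mem {C : Type*} [Groupoid C]
    (H : Subgroupoid C) {c a b : C} {p : c ⟶ a} {q : c ⟶ b} {g : a ⟶ b} (hp : p ∈ H.arrows c a)
    (hq : q ∈ H.arrows c b) (h : p ≫ g ≫ Groupoid.inv q ∈ H.arrows c c) :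
    g ∈ H.arrows a b := by
  simpa using H.mul (H.inv hp) (H.mul h hq)

namespace UPA

variable {Obj : Type*} [Groupoid Obj] {S : Type*} [CommRing S] (α : UPA Obj S)

lemma e_id_mul ⦃a b : Obj⦄ (g : a ⟶ b) : α.e (𝟙 b) * α.e g = α.e g := by
  rw [mul_comm, α.e_le]

lemma act_mul_e_id ⦃a b : Obj⦄ (g : a ⟶ b) (s : S) :
    α.act g (s * α.e (𝟙 a)) = α.act g s := by
  rw [α.act_mul, α.act_e_src, α.act_mem]

lemma act_mul_e_id_tgt ⦃a b : Obj⦄ (g : a ⟶ b) (s : S) :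
    α.act g s * α.e (𝟙 b) = α.act g s := by
  rw [← α.act_mem, mul_assoc, α.e_le]

lemma act_e ⦃a b c : Obj⦄ (h : a ⟶ b) (g : b ⟶ c) :
    α.act g (α.e h) = α.e (h ≫ g) * α.e g := by
  simpa only [α.act_one] using α.act_comp h g 1

lemma act_eq_zero_of_orthogonal ⦃a b z : Obj⦄ (g : a ⟶ b) {s : S}
    (hza : α.e (𝟙 z) * α.e (𝟙 a) = 0) (hs : s * α.e (𝟙 z) = s) : α.act g s = 0 := by
  rw [← α.act_mul_e_id, ← hs, mul_assoc, hza, mul_zero, α.act_zero]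

/-- `α_p` is an isomorphism of the whole corners `S_a ≅ S_b`, as the arrows of a group-type
transversal are. -/
def IsFull ⦃a b : Obj⦄ (p : a ⟶ b) : Prop :=
  α.e (Groupoid.inv p) = α.e (𝟙 a) ∧ α.e p = α.e (𝟙 b)

variable {α}

lemma IsFull.e_comp ⦃c a b : Obj⦄ {p : c ⟶ a} (hp : α.IsFull p) (g : a ⟶ b) :
    α.e (p ≫ g) = α.e g := by
  have hle : α.e g = α.e (p ≫ g) * α.e g := by
    simpa only [hp.2, α.act_e_src] using α.act_e p g
  have hge : α.e (p ≫ g) = α.e g * α.e (p ≫ g) := by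
    simpa only [hp.1, α.act_e_src, ← Category.assoc, Groupoid.inv_comp, Category.id_comp]
      using α.act_e (Groupoid.inv p) (p ≫ g)
  rw [hge, mul_comm, ← hle]

lemma IsFull.act_act ⦃c a b : Obj⦄ {p : c ⟶ a} (hp : α.IsFull p) (g : a ⟶ b) (s : S) :
    α.act g (α.act p s) = α.act (p ≫ g) s := by
  rw [α.act_comp, ← hp.e_comp g, α.act_mem]

lemma IsFull.act_comp_eq_iff ⦃c b : Obj⦄ {q : c ⟶ b} (hq : α.IsFull q) (l : c ⟶ c) {s : S}
    (hs : s * α.e (𝟙 c) = s) :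
    α.act (l ≫ q) s = α.act q s * α.e (l ≫ q) ↔ α.act l s = s * α.e l := by
  have hlq : (l ≫ q) ≫ Groupoid.inv q = l := by simp
  constructor
  · intro h
    have h' := congrArg (α.act (Groupoid.inv q)) h
    rwa [α.act_comp, hlq, hq.1, α.act_mul_e_id_tgt, α.act_mul, α.act_inv, α.act_e, hlq,
      hq.1, hs, α.e_le] at h'
  · intro h
    have h' := α.act_comp l q s
    rwa [h, α.act_mul, α.act_e, hq.2, α.act_mul_e_id_tgt, ← mul_assoc,
      mul_assoc (α.act q s), α.e_le, eq_comm] at h'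

section Orthogonal

variable [Fintype Obj]

lemma sum_mul_e_id (horth : ∀ y z : Obj, y ≠ z → α.e (𝟙 y) * α.e (𝟙 z) = 0)
    (F : Obj → S) (hF : ∀ z, F z * α.e (𝟙 z) = F z) (w : Obj) :
    (∑ z, F z) * α.e (𝟙 w) = F w := by
  rw [Finset.sum_mul, Finset.sum_eq_single_of_mem w (Finset.mem_univ w) fun z _ hzw => ?_,
    hF w]
  rw [← hF z, mul_assoc, horth z w hzw, mul_zero]

lemma act_sum (horth : ∀ y z : Obj, y ≠ z → α.e (𝟙 y) * α.e (𝟙 z) = 0)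
    (F : Obj → S) (hF : ∀ z, F z * α.e (𝟙 z) = F z) ⦃a b : Obj⦄ (g : a ⟶ b) :
    α.act g (∑ z, F z) = α.act g (F a) := by
  have hmap : α.act g (∑ z, F z) = ∑ z, α.act g (F z) :=
    map_sum (AddMonoidHom.mk' (α.act g) (α.act_add g)) F Finset.univ
  rw [hmap]
  exact Finset.sum_eq_single_of_mem a (Finset.mem_univ a) fun z _ hza =>
    α.act_eq_zero_of_orthogonal g (horth z a hza) (hF z)

lemma act_sum_eq_iff (horth : ∀ y z : Obj, y ≠ z → α.e (𝟙 y) * α.e (𝟙 z) = 0)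
    (F : Obj → S) (hF : ∀ z, F z * α.e (𝟙 z) = F z) ⦃a b : Obj⦄ (g : a ⟶ b) :
    α.act g (∑ z, F z) = (∑ z, F z) * α.e g ↔ α.act g (F a) = F b * α.e g := by
  rw [act_sum horth F hF, ← α.e_id_mul g, ← mul_assoc, sum_mul_e_id horth F hF, α.e_id_mul]

lemma sum_mem_invSet_iff (horth : ∀ y z : Obj, y ≠ z → α.e (𝟙 y) * α.e (𝟙 z) = 0)
    (F : Obj → S) (hF : ∀ z, F z * α.e (𝟙 z) = F z) (H : Subgroupoid Obj) :
    ∑ z, F z ∈ α.invSet H ↔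
      ∀ ⦃a b : Obj⦄ (h : a ⟶ b), h ∈ H.arrows a b → α.act h (F a) = F b * α.e h := by
  simp only [invSet, Set.mem_ofPred_eq, act_sum_eq_iff horth F hF]

end Orthogonal

section Spread

variable {Y : Set Obj} {c : Obj}

variable (α) in
noncomputable def spreadAt (σ : ∀ z ∈ Y, c ⟶ z) (s : S) (z : Obj) : S :=
  open Classical in if hz : z ∈ Y then α.act (σ z hz) s else 0

variable {σ : ∀ z ∈ Y, c ⟶ z} {s : S} {z : Obj}

lemma spreadAt_of_mem (hz : z ∈ Y) : α.spreadAt σ s z = α.act (σ z hz) s := dif_pos hz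

lemma spreadAt_of_notMem (hz : z ∉ Y) : α.spreadAt σ s z = 0 := dif_neg hz

lemma spreadAt_mul_e_id (hσ : ∀ z hz, α.IsFull (σ z hz)) (z : Obj) :
    α.spreadAt σ s z * α.e (𝟙 z) = α.spreadAt σ s z := by
  by_cases hz : z ∈ Y
  · rw [spreadAt_of_mem hz, ← (hσ z hz).2, α.act_mem]
  · rw [spreadAt_of_notMem hz, zero_mul]

variable [Fintype Obj] {H : Subgroupoid Obj}

lemma sum_spreadAt_mem_invSet (horth : ∀ y z : Obj, y ≠ z → α.e (𝟙 y) * α.e (𝟙 z) = 0)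
    (hY : ∀ ⦃a b : Obj⦄, (H.arrows a b).Nonempty → a ∈ Y → b ∈ Y)
    (hσH : ∀ z hz, σ z hz ∈ H.arrows c z) (hσ : ∀ z hz, α.IsFull (σ z hz))
    (hs : s ∈ α.grpInvSet c (H.arrows c c)) :
    ∑ z, α.spreadAt σ s z ∈ α.invSet H := by
  rw [sum_mem_invSet_iff horth _ (spreadAt_mul_e_id hσ)]
  intro a b h hh
  by_cases ha : a ∈ Y
  · have hb := hY ⟨h, hh⟩ ha
    set k := σ a ha ≫ h ≫ Groupoid.inv (σ b hb)
    have hk : σ a ha ≫ h = k ≫ σ b hb := by simp [k]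
    have hkH : k ∈ H.arrows c c := H.mul (hσH a ha) (H.mul hh (H.inv (hσH b hb)))
    rw [spreadAt_of_mem ha, spreadAt_of_mem hb, (hσ a ha).act_act, hk,
      ((hσ b hb).act_comp_eq_iff k hs.1).2 (hs.2 k hkH), ← hk, (hσ a ha).e_comp]
  · have hb : b ∉ Y := fun hb => ha (hY ⟨Groupoid.inv h, H.inv hh⟩ hb)
    rw [spreadAt_of_notMem ha, spreadAt_of_notMem hb, α.act_zero, zero_mul]

/-- The invariant `1_Y = ∑_{z ∈ Y} 1_z` would be moved to `0` by an arrow leaving `Y`. -/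
lemma mem_of_mem_fixingSet (horth : ∀ y z : Obj, y ≠ z → α.e (𝟙 y) * α.e (𝟙 z) = 0)
    (hY : ∀ ⦃a b : Obj⦄, (H.arrows a b).Nonempty → a ∈ Y → b ∈ Y)
    (hσH : ∀ z hz, σ z hz ∈ H.arrows c z) (hσ : ∀ z hz, α.IsFull (σ z hz))
    ⦃u v : Obj⦄ {g : u ⟶ v} (hg : g ∈ α.fixingSet (α.invSet H) u v) (hg0 : α.e g ≠ 0)
    (hu : u ∈ Y) : v ∈ Y := by
  by_contra hv
  have hunit := sum_spreadAt_mem_invSet horth hY hσH hσ (α.grpInvSet_unit_mem c _)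
  have h := (act_sum_eq_iff horth _ (spreadAt_mul_e_id hσ) g).1 (hg _ hunit)
  rw [spreadAt_of_mem hu, spreadAt_of_notMem hv, α.act_e_src, (hσ u hu).2, α.act_e_src,
    zero_mul] at h
  exact hg0 h

lemma conj_mem_fixingSet_grpInvSet
    (horth : ∀ y z : Obj, y ≠ z → α.e (𝟙 y) * α.e (𝟙 z) = 0)
    (hY : ∀ ⦃a b : Obj⦄, (H.arrows a b).Nonempty → a ∈ Y → b ∈ Y)
    (hσH : ∀ z hz, σ z hz ∈ H.arrows c z) (hσ : ∀ z hz, α.IsFull (σ z hz))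
    ⦃u v : Obj⦄ {g : u ⟶ v} (hg : g ∈ α.fixingSet (α.invSet H) u v) (hu : u ∈ Y)
    (hv : v ∈ Y) :
    σ u hu ≫ g ≫ Groupoid.inv (σ v hv) ∈ α.fixingSet (α.grpInvSet c (H.arrows c c)) c c := by
  intro s hs
  have h := (act_sum_eq_iff horth _ (spreadAt_mul_e_id hσ) g).1
    (hg _ (sum_spreadAt_mem_invSet horth hY hσH hσ hs))
  have hconj : (σ u hu ≫ g ≫ Groupoid.inv (σ v hv)) ≫ σ v hv = σ u hu ≫ g := by simp
  rw [spreadAt_of_mem hu, spreadAt_of_mem hv, (hσ u hu).act_act,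
    ← (hσ u hu).e_comp g, ← hconj] at h
  exact ((hσ v hv).act_comp_eq_iff _ hs.1).1 h

end Spread

variable (α)

lemma arrows_subset_fixingSet_invSet (H : Subgroupoid Obj) (a b : Obj) :
    H.arrows a b ⊆ α.fixingSet (α.invSet H) a b :=
  fun _ hh _ ht => ht _ hh

lemma arrows_subset_fixingSet_grpInvSet (H : Subgroupoid Obj) (y : Obj) :
    H.arrows y y ⊆ α.fixingSet (α.grpInvSet y (H.arrows y y)) y y :=
  fun l hl _ ht => ht.2 l hl

lemma fixingSet_grpInvSet_subset (H : Subgroupoid Obj) (y : Obj) :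
    α.fixingSet (α.grpInvSet y (H.arrows y y)) y y ⊆ α.fixingSet (α.invSet H) y y := by
  intro l hl t ht
  have hty : t * α.e (𝟙 y) ∈ α.grpInvSet y (H.arrows y y) :=
    ⟨by rw [mul_assoc, α.idem], fun g hg => by
      rw [α.act_mul_e_id, ht g hg, mul_assoc, α.e_id_mul]⟩
  simpa only [α.act_mul_e_id, mul_assoc, α.e_id_mul] using hl _ hty

end UPA

/-- **Proposition 4.3 (ii).**  Standing hypotheses, with `1_g ≠ 0` for all `g`.  With
`ℋ ∈ wSub_gt(𝒢)`, its component data and `T = S^{α_ℋ}`, `T_{y_j} = S_{y_j}^{α_{ℋ_j(y_j)}}`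
as before: `𝒢_T = ℋ` if and only if `𝒢(y_j)_{T_{y_j}} = ℋ_j(y_j)` for all `1 ≤ j ≤ r`. -/
theorem fixing_eq_iff_isotropy_eq
    {Obj : Type*} [Groupoid Obj] [Fintype Obj] [∀ a b : Obj, Finite (a ⟶ b)]
    {S : Type*} [CommRing S] (α : UPA Obj S)
    (hsum : ∑ y : Obj, α.e (𝟙 y) = 1)
    (horth : ∀ y z : Obj, y ≠ z → α.e (𝟙 y) * α.e (𝟙 z) = 0)
    (hconn : ∀ a b : Obj, Nonempty (a ⟶ b))
    (x : Obj) (τ : ∀ y : Obj, x ⟶ y) (hτx : τ x = 𝟙 x)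
    (hgt : ∀ y : Obj, α.e (Groupoid.inv (τ y)) = α.e (𝟙 x) ∧ α.e (τ y) = α.e (𝟙 y))
    (hne : ∀ ⦃a b : Obj⦄ (g : a ⟶ b), α.e g ≠ 0)
    (H : Subgroupoid Obj) (hwide : H.IsWide)
    (r : ℕ) (Y : Fin r → Set Obj)
    (hYcover : ∀ u : Obj, ∃ j, u ∈ Y j)
    (hYconn : ∀ j, ∀ u ∈ Y j, ∀ v ∈ Y j, (H.arrows u v).Nonempty)
    (hYdisj : ∀ j k, j ≠ k → ∀ u ∈ Y j, ∀ v ∈ Y k, H.arrows u v = ∅)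
    (y : Fin r → Obj) (hy : ∀ j, y j ∈ Y j)
    (τj : ∀ (j : Fin r) (z : Obj), z ∈ Y j → ((y j) ⟶ z))
    (hτjH : ∀ j z hz, τj j z hz ∈ H.arrows (y j) z)
    (hτjid : ∀ j, τj j (y j) (hy j) = 𝟙 (y j))
    (hτjgt : ∀ j z hz, α.e (Groupoid.inv (τj j z hz)) = α.e (𝟙 (y j)) ∧
        α.e (τj j z hz) = α.e (𝟙 z)) :
    ((∀ u v : Obj, α.fixingSet (α.invSet H) u v = H.arrows u v) ↔
      ∀ j : Fin r,
        α.fixingSet (α.grpInvSet (y j) (H.arrows (y j) (y j))) (y j) (y j)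
          = H.arrows (y j) (y j)) := by
  have hclosed : ∀ j ⦃a b : Obj⦄, (H.arrows a b).Nonempty → a ∈ Y j → b ∈ Y j := by
    rintro j a b ⟨h, hh⟩ ha
    obtain ⟨k, hb⟩ := hYcover b
    by_contra hjk
    rw [hYdisj j k (fun hjk' => hjk (hjk' ▸ hb)) a ha b hb] at hh
    exact hh
  constructor
  · intro hfix j
    exact ((α.fixingSet_grpInvSet_subset H _).trans (hfix _ _).subset).antisymm
      (α.arrows_subset_fixingSet_grpInvSet H _)
  · intro hiso u v
    refine Set.Subset.antisymm (fun g hg => ?_) (α.arrows_subset_fixingSet_invSet H u v)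
    obtain ⟨j, hu⟩ := hYcover u
    have hv := UPA.mem_of_mem_fixingSet horth (hclosed j) (hτjH j) (hτjgt j) hg (hne g) hu
    have hconj :=
      UPA.conj_mem_fixingSet_grpInvSet horth (hclosed j) (hτjH j) (hτjgt j) hg hu hv
    rw [hiso j] at hconj
    exact H.mem_of_comp_comp_inv_mem (hτjH j u hu) (hτjH j v hv) hconj

end PaperGalois
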